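/- arXiv:0805.1971 — 8 statements merged into one kernel-verified Lean document; each statement's English description precedes it below -/
import Mathlib

section
/- Let E be a finite set, K a finite linearly ordered index set with minimum and maximum, and (A_k)_{k∈K} a covering collection of E (i.e. A_k ⊆ E, A_k ⊊ A_{k'} whenever k < k', A_{min K} = ∅ and A_{max K} = E). For x ∈ E let k_x denote the smallest k ∈ K with x ∈ A_k. Let (μ_θ)_{θ∈Θ} be a family of probability measures on E and fix α ∈ (0,1). Then for every θ* ∈ Θ, the set R_α(x) = {θ ∈ Θ : μ_θ(A_{k_x}) ≥ α} satisfies μ_θ*({x ∈ E : θ* ∈ R_α(x)}) ≥ 1 − α; that is, if X ∼ μ_θ* then P(θ* ∈ R_α(X)) ≥ 1 − α. -/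
/-!
The observations `x` with `μ_{θ*}(A_{k_x}) < α` form a set `B`. Among them pick one, `x₀`, with
`k_{x₀}` largest; since the family is increasing, every `x ∈ B` lies in `A_{k_x} ⊆ A_{k_{x₀}}`,
so `μ_{θ*}(B) ≤ μ_{θ*}(A_{k_{x₀}}) < α`, and the complement of `B` has mass at least `1 - α`.
-/

open Finset

theorem sum_filter_sum_lt_le_of_monotone {E K M : Type*} [LinearOrder K] [AddCommMonoid M]
    [PartialOrder M] [IsOrderedAddMonoid M] [DecidableLT M] {A : K → Finset E} (hA : Monotone A)
    {kx : E → K} {s : Finset E} (hkx : ∀ x ∈ s, x ∈ A (kx x)) {w : E → M} (hw : ∀ x, 0 ≤ w x)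
    {α : M} (hα : 0 ≤ α) :
    ∑ x ∈ s.filter (fun x => ∑ j ∈ A (kx x), w j < α), w x ≤ α := by
  set B := s.filter (fun x => ∑ j ∈ A (kx x), w j < α)
  obtain hB | hB := B.eq_empty_or_nonempty
  · simpa [hB] using hα
  obtain ⟨x₀, hx₀, hmax⟩ := B.exists_max_image kx hB
  have hsub : B ⊆ A (kx x₀) := fun x hx =>
    hA (hmax x hx) (hkx x (mem_filter.1 hx).1)
  calc ∑ x ∈ B, w x ≤ ∑ j ∈ A (kx x₀), w j :=
        sum_le_sum_of_subset_of_nonneg hsub fun x _ _ => hw x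
    _ ≤ α := (mem_filter.1 hx₀).2.le

theorem covering_collection_confidence_region_general
    {E K Θ : Type*} [Fintype E] [LinearOrder K]
    (A : K → Finset E)
    (hmono : ∀ k k' : K, k < k' → A k ⊂ A k')
    (kx : E → K)
    (hkx : ∀ x : E, x ∈ A (kx x) ∧ ∀ k : K, x ∈ A k → kx x ≤ k)
    (μ : Θ → E → ℝ)
    (hμ0 : ∀ θ : Θ, ∀ x : E, 0 ≤ μ θ x)
    (hμ1 : ∀ θ : Θ, ∑ x : E, μ θ x = 1)
    (α : ℝ) (hα : α ∈ Set.Ioo (0 : ℝ) 1)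
    (θstar : Θ) :
    ∑ x ∈ Finset.univ.filter
        (fun x : E => α ≤ ∑ j ∈ A (kx x), μ θstar j),
      μ θstar x ≥ 1 - α := by
  have hA : Monotone A := StrictMono.monotone fun k k' h => hmono k k' h
  have hbad := sum_filter_sum_lt_le_of_monotone hA (s := univ) (fun x _ => (hkx x).1)
    (hμ0 θstar) hα.1.le
  have hsplit := sum_filter_add_sum_filter_not univ
    (fun x => α ≤ ∑ j ∈ A (kx x), μ θstar j) (μ θstar)
  simp only [not_le, hμ1] at hsplit
  linarith

/-- **Coverage of the confidence region associated with a covering collection.**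
`E` is a finite set, `K` a finite linearly ordered index set, `A` a covering
collection of `E` (strictly increasing, from `∅` to `E`), `kx x` the smallest
`k` with `x ∈ A k`, and `μ θ` a probability mass function on `E` for each
`θ ∈ Θ`.  The region `R_α(x) = {θ : μ_θ(A_{k_x}) ≥ α}` has coverage at least
`1 - α` under `μ θ*`. -/
theorem covering_collection_confidence_region
    {E K Θ : Type*} [Fintype E] [Fintype K] [LinearOrder K] [Nonempty K]
    (A : K → Finset E)
    (hmono : ∀ k k' : K, k < k' → A k ⊂ A k')
    (hbot : A (Finset.univ.min' Finset.univ_nonempty) = ∅)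
    (htop : A (Finset.univ.max' Finset.univ_nonempty) = Finset.univ)
    (kx : E → K)
    (hkx : ∀ x : E, x ∈ A (kx x) ∧ ∀ k : K, x ∈ A k → kx x ≤ k)
    (μ : Θ → E → ℝ)
    (hμ0 : ∀ θ : Θ, ∀ x : E, 0 ≤ μ θ x)
    (hμ1 : ∀ θ : Θ, ∑ x : E, μ θ x = 1)
    (α : ℝ) (hα : α ∈ Set.Ioo (0 : ℝ) 1)
    (θstar : Θ) :
    ∑ x ∈ Finset.univ.filter
        (fun x : E => α ≤ ∑ j ∈ A (kx x), μ θstar j),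
      μ θstar x ≥ 1 - α :=
  covering_collection_confidence_region_general A hmono kx hkx μ hμ0 hμ1 α hα θstar
end

section
/- Let E be a finite set, (A_k)_{0≤k≤κ} a covering collection of E, and A'_k = E ∖ A_{κ−k} its symmetrized covering collection. Let (μ_θ)_{θ∈Θ} be a family of probability measures on E, α ∈ (0,1), and θ* ∈ Θ. Define, for each x ∈ E, R_{α/2}(x) = {θ ∈ Θ : μ_θ(A_{k_x}) > α/2} and R'_{α/2}(x) = {θ ∈ Θ : μ_θ(A'_{k'_x}) > α/2}, where k_x (resp. k'_x) is the smallest k with x ∈ A_k (resp. x ∈ A'_k). Then for X ∼ μ_θ*, the region R_{α/2}(X) ∩ R'_{α/2}(X) has coverage at least 1 − α: P(θ* ∈ R_{α/2}(X) ∩ R'_{α/2}(X)) ≥ 1 − α. -/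
/-!
Call `x` bad for a nested family `B` when `μ(B (k x)) ≤ c`. Every bad point lies in
`B (k x₀)` for the bad point `x₀` with the largest index, so the bad points carry mass at most
`μ(B (k x₀)) ≤ c`. The symmetrized collection is nested as well, so with `c = α/2` each of the two
regions misses `θ*` with probability at most `α/2`, and a union bound gives `α`.
-/

open Finset

theorem MonotoneOn.sdiff_tsub {α : Type*} [GeneralizedBooleanAlgebra α] {A : ℕ → α} {κ : ℕ}
    (hA : MonotoneOn A (Set.Iic κ)) (c : α) :
    MonotoneOn (fun k => c \ A (κ - k)) (Set.Iic κ) :=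
  fun _ _ _ _ hkl =>
    sdiff_le_sdiff_left (hA (Nat.sub_le κ _) (Nat.sub_le κ _) (Nat.sub_le_sub_left hkl κ))

section WeightedSums

variable {E M : Type*} [AddCommMonoid M] [LinearOrder M] [IsOrderedAddMonoid M]
  {s : Finset E} {w : E → M}

theorem Finset.sum_filter_not_lt_sum_le {ι : Type*} [LinearOrder ι] {I : Set ι}
    {B : ι → Finset E} (hB : MonotoneOn B I) {k : E → ι} (hkI : ∀ x, k x ∈ I)
    (hkB : ∀ x, x ∈ B (k x)) (hw : ∀ x, 0 ≤ w x) {c : M} (hc : 0 ≤ c) :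
    ∑ x ∈ s with ¬c < ∑ j ∈ B (k x), w j, w x ≤ c := by
  set bad := {x ∈ s | ¬c < ∑ j ∈ B (k x), w j}
  rcases bad.eq_empty_or_nonempty with hempty | hne
  · rwa [hempty, sum_empty]
  obtain ⟨x₀, hx₀, hx₀_max⟩ := bad.exists_max_image k hne
  have hbad_sub : bad ⊆ B (k x₀) := fun x hx => hB (hkI x) (hkI x₀) (hx₀_max x hx) (hkB x)
  calc ∑ x ∈ bad, w x ≤ ∑ x ∈ B (k x₀), w x :=
        sum_le_sum_of_subset_of_nonneg hbad_sub fun i _ _ => hw i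
    _ ≤ c := not_lt.mp (mem_filter.mp hx₀).2

theorem Finset.sum_filter_not_and_le [DecidableEq E] (hw : ∀ x ∈ s, 0 ≤ w x) (p q : E → Prop)
    [DecidablePred p] [DecidablePred q] :
    ∑ x ∈ s with ¬(p x ∧ q x), w x ≤ ∑ x ∈ s with ¬p x, w x + ∑ x ∈ s with ¬q x, w x := by
  simp only [not_and_or, filter_or]
  rw [← sum_union_inter]
  exact le_add_of_nonneg_right <|
    sum_nonneg fun x hx => hw x (mem_filter.mp (mem_of_mem_inter_left hx)).1

end WeightedSums

theorem symmetrized_covering_collection_coverage_general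
    {E Θ : Type*} [Fintype E] [DecidableEq E]
    (κ : ℕ) (A A' : ℕ → Finset E)
    (hmono : ∀ k k' : ℕ, k ≤ κ → k' ≤ κ → k < k' → A k ⊂ A k')
    (hA' : ∀ k : ℕ, k ≤ κ → A' k = Finset.univ \ A (κ - k))
    (kx kx' : E → ℕ)
    (hkx : ∀ x : E, kx x ≤ κ ∧ x ∈ A (kx x) ∧
      ∀ k : ℕ, k ≤ κ → x ∈ A k → kx x ≤ k)
    (hkx' : ∀ x : E, kx' x ≤ κ ∧ x ∈ A' (kx' x) ∧
      ∀ k : ℕ, k ≤ κ → x ∈ A' k → kx' x ≤ k)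
    (μ : Θ → E → ℝ)
    (hμ0 : ∀ θ : Θ, ∀ x : E, 0 ≤ μ θ x)
    (hμ1 : ∀ θ : Θ, ∑ x : E, μ θ x = 1)
    (α : ℝ) (hα : α ∈ Set.Ioo (0 : ℝ) 1)
    (θstar : Θ) :
    ∑ x ∈ Finset.univ.filter (fun x : E =>
        α / 2 < (∑ j ∈ A (kx x), μ θstar j) ∧
        α / 2 < (∑ j ∈ A' (kx' x), μ θstar j)),
      μ θstar x ≥ 1 - α := by
  have hα2 : 0 ≤ α / 2 := by linarith [hα.1]
  have hA_mono : MonotoneOn A (Set.Iic κ) :=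
    StrictMonoOn.monotoneOn fun k hk k' hk' hlt => hmono k k' hk hk' hlt
  have hA'_mono : MonotoneOn A' (Set.Iic κ) :=
    (hA_mono.sdiff_tsub univ).congr fun k hk => (hA' k hk).symm
  have hmiss := sum_filter_not_lt_sum_le (s := univ) hA_mono (fun x => (hkx x).1)
    (fun x => (hkx x).2.1) (hμ0 θstar) hα2
  have hmiss' := sum_filter_not_lt_sum_le (s := univ) hA'_mono (fun x => (hkx' x).1)
    (fun x => (hkx' x).2.1) (hμ0 θstar) hα2
  have hunion := sum_filter_not_and_le (s := univ) (fun x _ => hμ0 θstar x)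
    (fun x => α / 2 < ∑ j ∈ A (kx x), μ θstar j) (fun x => α / 2 < ∑ j ∈ A' (kx' x), μ θstar j)
  have htotal := sum_filter_add_sum_filter_not univ
    (fun x => α / 2 < ∑ j ∈ A (kx x), μ θstar j ∧ α / 2 < ∑ j ∈ A' (kx' x), μ θstar j) (μ θstar)
  linarith [hμ1 θstar]

/-- **Symmetrization lemma: coverage of the two-sided region.**
For a covering collection `(A k)_{0 ≤ k ≤ κ}` of a finite set `E`, its
symmetrization `A' k = E \ A (κ - k)`, a family `(μ θ)` of probability
measures on `E`, and `α ∈ (0,1)`, the intersection of the regions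
`R_{α/2}(x) = {θ : μ_θ(A (kx x)) > α/2}` and
`R'_{α/2}(x) = {θ : μ_θ(A' (kx' x)) > α/2}` has coverage at least `1 - α`
under `μ θ*`. -/
theorem symmetrized_covering_collection_coverage
    {E Θ : Type*} [Fintype E] [DecidableEq E]
    (κ : ℕ) (A A' : ℕ → Finset E)
    (hbot : A 0 = ∅) (htop : A κ = Finset.univ)
    (hmono : ∀ k k' : ℕ, k ≤ κ → k' ≤ κ → k < k' → A k ⊂ A k')
    (hA' : ∀ k : ℕ, k ≤ κ → A' k = Finset.univ \ A (κ - k))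
    (kx kx' : E → ℕ)
    (hkx : ∀ x : E, kx x ≤ κ ∧ x ∈ A (kx x) ∧
      ∀ k : ℕ, k ≤ κ → x ∈ A k → kx x ≤ k)
    (hkx' : ∀ x : E, kx' x ≤ κ ∧ x ∈ A' (kx' x) ∧
      ∀ k : ℕ, k ≤ κ → x ∈ A' k → kx' x ≤ k)
    (μ : Θ → E → ℝ)
    (hμ0 : ∀ θ : Θ, ∀ x : E, 0 ≤ μ θ x)
    (hμ1 : ∀ θ : Θ, ∑ x : E, μ θ x = 1)
    (α : ℝ) (hα : α ∈ Set.Ioo (0 : ℝ) 1)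
    (θstar : Θ) :
    ∑ x ∈ Finset.univ.filter (fun x : E =>
        α / 2 < (∑ j ∈ A (kx x), μ θstar j) ∧
        α / 2 < (∑ j ∈ A' (kx' x), μ θstar j)),
      μ θstar x ≥ 1 - α :=
  symmetrized_covering_collection_coverage_general κ A A' hmono hA' kx kx' hkx hkx' μ hμ0 hμ1 α hα
    θstar
end

section
/- Fix integers d ≥ 2 and n ≥ 1, let E_d = {x ∈ {0,…,n}^d : x_1 + ⋯ + x_d = n}, and for a probability vector p ∈ Λ_d let μ_p(k) = (n!/(k_1!⋯k_d!)) ∏_i p_i^{k_i}. Then for every x ∈ E_d, the maximum likelihood estimator p̂ = x/n makes x a mode of the multinomial distribution M_d(n, p̂): for all k ∈ E_d, μ_{p̂}(x) ≥ μ_{p̂}(k). Consequently, for every α ∈ (0,1), p̂ belongs to the level-set confidence region R_α(x) = {p ∈ Λ_d : μ_p(x) ≥ u(p,α)}, where u(p,α) = sup{u ∈ [0,1] : Σ_{k∈E_d, μ_p(k) ≥ u} μ_p(k) ≥ 1 − α}. -/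
/-!
With `p̂ = x / n` and `Σ kᵢ = n`, the factor `n⁻ⁿ` pulls out of the likelihood:
`μ_p̂(k) = (n! / nⁿ) ∏ xᵢ^kᵢ / kᵢ!`. Each factor `xᵢ^k / k!` is a Poisson weight with
integer mean `xᵢ`, which is largest at `k = xᵢ`; hence `x` is a mode. For `u` above the
largest mass the level set `{k : μ(k) ≥ u}` is empty and carries mass `0 < 1 - α`,
so the threshold `u(p̂, α)` cannot exceed `μ_p̂(x)`.
-/

open Finset

/-- The support `E_d = {x ∈ {0,…,n}^d : Σ x_i = n}` of the multinomial
distribution, as a finset of `Fin d → Fin (n+1)`. -/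
def multinomialSupport (d n : ℕ) : Finset (Fin d → Fin (n + 1)) :=
  Finset.univ.filter (fun x => ∑ i, (x i : ℕ) = n)

/-- The multinomial probability mass function
`μ_p(k) = (n!/(k₁!⋯k_d!)) ∏ i, p i ^ k i`. -/
noncomputable def multinomialPMF (d n : ℕ) (p : Fin d → ℝ)
    (k : Fin d → Fin (n + 1)) : ℝ :=
  ((Nat.factorial n : ℝ) / ∏ i, (Nat.factorial (k i : ℕ) : ℝ)) *
    ∏ i, p i ^ (k i : ℕ)

/-- The level-set threshold
`u(p,α) = sup{u ∈ [0,1] : Σ_{k ∈ E_d, μ_p(k) ≥ u} μ_p(k) ≥ 1 - α}`. -/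
noncomputable def levelSetThreshold (d n : ℕ) (p : Fin d → ℝ) (α : ℝ) : ℝ :=
  sSup {u : ℝ | u ∈ Set.Icc (0 : ℝ) 1 ∧
    1 - α ≤ ∑ k ∈ (multinomialSupport d n).filter
        (fun k => u ≤ multinomialPMF d n p k), multinomialPMF d n p k}

open Nat

theorem Nat.pow_mul_factorial_le_pow_self_mul_factorial (x k : ℕ) :
    x ^ k * x ! ≤ x ^ x * k ! := by
  rcases le_total k x with hkx | hxk
  · have hpow : x ^ x = x ^ k * x ^ (x - k) := by rw [← pow_add, Nat.add_sub_cancel' hkx]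
    calc x ^ k * x !
        = x ^ k * (k ! * x.descFactorial (x - k)) := by
          rw [← Nat.factorial_mul_descFactorial (Nat.sub_le x k), Nat.sub_sub_self hkx]
      _ ≤ x ^ k * (k ! * x ^ (x - k)) := by gcongr; exact Nat.descFactorial_le_pow x _
      _ = x ^ x * k ! := by rw [hpow]; ring
  · have hpow : x ^ k = x ^ x * x ^ (k - x) := by rw [← pow_add, Nat.add_sub_cancel' hxk]
    calc x ^ k * x !
        = x ^ x * (x ! * x ^ (k - x)) := by rw [hpow]; ring
      _ ≤ x ^ x * k ! := by gcongr; exact Nat.factorial_mul_pow_sub_le_factorial hxk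

theorem pow_div_factorial_le_pow_self_div_factorial (x k : ℕ) :
    (x : ℝ) ^ k / k ! ≤ (x : ℝ) ^ x / x ! := by
  rw [div_le_div_iff₀ (by positivity) (by positivity)]
  exact_mod_cast Nat.pow_mul_factorial_le_pow_self_mul_factorial x k

theorem multinomialPMF_nonneg {d n : ℕ} {p : Fin d → ℝ} (hp : ∀ i, 0 ≤ p i)
    (k : Fin d → Fin (n + 1)) : 0 ≤ multinomialPMF d n p k :=
  mul_nonneg (by positivity) (prod_nonneg fun i _ => pow_nonneg (hp i) _)

theorem multinomialPMF_div_eq {d n : ℕ} (x k : Fin d → Fin (n + 1))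
    (hk : k ∈ multinomialSupport d n) :
    multinomialPMF d n (fun i => (x i : ℝ) / n) k =
      (n ! / (n : ℝ) ^ n) * ∏ i, (x i : ℝ) ^ (k i : ℕ) / (k i : ℕ)! := by
  have hsum : ∑ i, (k i : ℕ) = n := (mem_filter.mp hk).2
  simp only [multinomialPMF, div_pow, prod_div_distrib, prod_pow_eq_pow_sum, hsum]
  ring

theorem multinomialPMF_div_le_self {d n : ℕ} {x : Fin d → Fin (n + 1)}
    (hx : x ∈ multinomialSupport d n) {k : Fin d → Fin (n + 1)}
    (hk : k ∈ multinomialSupport d n) :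
    multinomialPMF d n (fun i => (x i : ℝ) / n) k ≤
      multinomialPMF d n (fun i => (x i : ℝ) / n) x := by
  rw [multinomialPMF_div_eq x k hk, multinomialPMF_div_eq x x hx]
  refine mul_le_mul_of_nonneg_left (prod_le_prod (fun i _ => by positivity) fun i _ => ?_)
    (by positivity)
  exact pow_div_factorial_le_pow_self_div_factorial _ _

theorem levelSetThreshold_le_of_forall_le {d n : ℕ} {p : Fin d → ℝ} {α m : ℝ}
    (hα : α < 1) (hm : 0 ≤ m) (hle : ∀ k ∈ multinomialSupport d n, multinomialPMF d n p k ≤ m) :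
    levelSetThreshold d n p α ≤ m := by
  refine Real.sSup_le (fun u ⟨_, hmass⟩ => ?_) hm
  by_contra! hmu
  have hempty : (multinomialSupport d n).filter (fun k => u ≤ multinomialPMF d n p k) = ∅ :=
    filter_eq_empty_iff.mpr fun k hk hu => (hle k hk).not_gt (hmu.trans_le hu)
  rw [hempty, sum_empty] at hmass
  linarith

theorem mle_in_level_set_region_general
    (d n : ℕ)
    (x : Fin d → Fin (n + 1)) (hx : x ∈ multinomialSupport d n) :
    (∀ k ∈ multinomialSupport d n,
        multinomialPMF d n (fun i => (x i : ℝ) / n) k ≤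
          multinomialPMF d n (fun i => (x i : ℝ) / n) x) ∧
      ∀ α : ℝ, α ∈ Set.Ioo (0 : ℝ) 1 →
        levelSetThreshold d n (fun i => (x i : ℝ) / n) α ≤
          multinomialPMF d n (fun i => (x i : ℝ) / n) x := by
  have hmode := fun k (hk : k ∈ multinomialSupport d n) => multinomialPMF_div_le_self hx hk
  refine ⟨hmode, fun α hα => levelSetThreshold_le_of_forall_le hα.2 ?_ hmode⟩
  exact multinomialPMF_nonneg (fun i => by positivity) x

/-- **The MLE makes the observation a mode, and belongs to the level-set
region.** For `x ∈ E_d` and `p̂ = x/n`, `x` is a mode of `M_d(n, p̂)`, and for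
every `α ∈ (0,1)` the MLE `p̂` belongs to the level-set confidence region
`R_α(x) = {p : μ_p(x) ≥ u(p,α)}`. -/
theorem mle_in_level_set_region
    (d n : ℕ) (hd : 2 ≤ d) (hn : 1 ≤ n)
    (x : Fin d → Fin (n + 1)) (hx : x ∈ multinomialSupport d n) :
    (∀ k ∈ multinomialSupport d n,
        multinomialPMF d n (fun i => (x i : ℝ) / n) k ≤
          multinomialPMF d n (fun i => (x i : ℝ) / n) x) ∧
      ∀ α : ℝ, α ∈ Set.Ioo (0 : ℝ) 1 →
        levelSetThreshold d n (fun i => (x i : ℝ) / n) α ≤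
          multinomialPMF d n (fun i => (x i : ℝ) / n) x :=
  mle_in_level_set_region_general d n x hx
end

section
/- Let μ be a probability measure on a finite set E such that the point masses are pairwise distinct (x ≠ y implies μ({x}) ≠ μ({y})). Fix α ∈ (0,1), let A(u) = {x ∈ E : μ({x}) ≥ u}, u(α) = sup{u ∈ [0,1] : μ(A(u)) ≥ 1 − α}, and K(α) = A(u(α)). Then K(α) has minimal cardinality among all sets of mass at least 1 − α: there is no subset B ⊆ E with μ(B) ≥ 1 − α and card(B) < card(K(α)). -/
/-!
A set of `k` points of maximal mass is, by an exchange argument and the distinctness of the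
point masses, an upper level set `{μ ≥ μ y₀}`. If `B` had mass `≥ 1 - α` and fewer points than
`K(α)`, the level set of size `#B` would have mass `≥ 1 - α` as well, so `μ y₀ ≤ u(α)` and
`K(α) ⊆ {μ ≥ μ y₀}`, which has only `#B` points.
-/

open Finset

section TopSets

variable {E M : Type*} [AddCommMonoid M] [LinearOrder M] [IsOrderedCancelAddMonoid M]
  {μ : E → M} {C : Finset E}

/-- Exchanging `y ∈ C` for `x ∉ C` keeps the cardinality, so it cannot increase the sum. -/
theorem le_of_isMaxOn_sum_of_notMem [DecidableEq E]
    (hC : IsMaxOn (fun D : Finset E => ∑ y ∈ D, μ y) {D | D.card = C.card} C)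
    {x y : E} (hy : y ∈ C) (hx : x ∉ C) : μ x ≤ μ y := by
  have hxe : x ∉ C.erase y := fun h => hx (mem_of_mem_erase h)
  have hcard : (insert x (C.erase y)).card = C.card := by
    rw [card_insert_of_notMem hxe, card_erase_add_one hy]
  have hsum := isMaxOn_iff.mp hC _ hcard
  rw [sum_insert hxe, ← add_sum_erase C μ hy] at hsum
  exact le_of_add_le_add_right hsum

theorem filter_le_eq_of_isMaxOn_sum [Fintype E] (hμ : Function.Injective μ)
    (hC : IsMaxOn (fun D : Finset E => ∑ y ∈ D, μ y) {D | D.card = C.card} C)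
    {y₀ : E} (hy₀ : y₀ ∈ C) (hmin : ∀ y ∈ C, μ y₀ ≤ μ y) :
    univ.filter (fun y => μ y₀ ≤ μ y) = C := by
  classical
  ext x
  simp only [mem_filter, mem_univ, true_and]
  refine ⟨fun hx => ?_, hmin x⟩
  by_contra hxC
  have hlt : μ x < μ y₀ := (le_of_isMaxOn_sum_of_notMem hC hy₀ hxC).lt_of_ne
    (hμ.ne fun h => hxC (h ▸ hy₀))
  exact hlt.not_ge hx

theorem exists_filter_le_card_eq_sum_le [Fintype E] (hμ : Function.Injective μ)
    {B : Finset E} (hB : B.Nonempty) :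
    ∃ y₀ : E, (univ.filter (fun y => μ y₀ ≤ μ y)).card = B.card ∧
      ∑ y ∈ B, μ y ≤ ∑ y ∈ univ.filter (fun y => μ y₀ ≤ μ y), μ y := by
  obtain ⟨C, hCmem, hCmax⟩ := exists_max_image (univ.powersetCard B.card)
    (fun D => ∑ y ∈ D, μ y) ⟨B, mem_powersetCard_univ.mpr rfl⟩
  have hCcard : C.card = B.card := mem_powersetCard_univ.mp hCmem
  have hC : IsMaxOn (fun D : Finset E => ∑ y ∈ D, μ y) {D | D.card = C.card} C :=
    isMaxOn_iff.mpr fun D hD => hCmax D (mem_powersetCard_univ.mpr (hD.trans hCcard))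
  obtain ⟨y₀, hy₀, hmin⟩ := C.exists_min_image μ (card_pos.mp (hCcard ▸ hB.card_pos))
  refine ⟨y₀, ?_⟩
  rw [filter_le_eq_of_isMaxOn_sum hμ hC hy₀ hmin]
  exact ⟨hCcard, hCmax B (mem_powersetCard_univ.mpr rfl)⟩

end TopSets

/-- **Cardinality minimality of the level-set acceptance region.**
If the point masses of `μ` are pairwise distinct, then the level-set region
`K(α) = A(u(α))`, where `A(u) = {x : μ({x}) ≥ u}` and
`u(α) = sup{u ∈ [0,1] : μ(A(u)) ≥ 1 - α}`, has minimal cardinality among all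
subsets of mass at least `1 - α`. -/
theorem level_set_region_minimal_cardinality
    {E : Type*} [Fintype E]
    (μ : E → ℝ)
    (hμ0 : ∀ x : E, 0 ≤ μ x)
    (hμ1 : ∑ x : E, μ x = 1)
    (hinj : ∀ x y : E, x ≠ y → μ x ≠ μ y)
    (α : ℝ) (hα : α ∈ Set.Ioo (0 : ℝ) 1)
    (u : ℝ)
    (hu : u = sSup {v : ℝ | v ∈ Set.Icc (0 : ℝ) 1 ∧
      1 - α ≤ ∑ y ∈ Finset.univ.filter (fun y : E => v ≤ μ y), μ y}) :
    ¬ ∃ B : Finset E, 1 - α ≤ (∑ y ∈ B, μ y) ∧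
      B.card < (Finset.univ.filter (fun y : E => u ≤ μ y)).card := by
  rintro ⟨B, hB, hcard⟩
  have hBne : B.Nonempty := nonempty_of_sum_ne_zero (f := μ) (by linarith [hα.2])
  have hμ : Function.Injective μ := fun x y h => not_not.mp fun hne => hinj x y hne h
  obtain ⟨y₀, hKcard, hBK⟩ := exists_filter_le_card_eq_sum_le hμ hBne
  have hmem : μ y₀ ∈ {v : ℝ | v ∈ Set.Icc (0 : ℝ) 1 ∧
      1 - α ≤ ∑ y ∈ Finset.univ.filter (fun y : E => v ≤ μ y), μ y} :=
    ⟨⟨hμ0 y₀, hμ1 ▸ single_le_sum (fun x _ => hμ0 x) (mem_univ y₀)⟩, hB.trans hBK⟩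
  have hu₀ : μ y₀ ≤ u := hu ▸ le_csSup ⟨1, fun v hv => hv.1.2⟩ hmem
  have hsub : univ.filter (fun y => u ≤ μ y) ⊆ univ.filter (fun y => μ y₀ ≤ μ y) :=
    monotone_filter_right _ fun _ _ hy => hu₀.trans hy
  have := card_le_card hsub
  omega
end

section
/- Let E be a finite set, (μ_θ)_{θ∈Θ} a family of probability measures on E, and α ∈ (0,1). For each θ ∈ Θ let K(θ,α) ⊆ E satisfy μ_θ(K(θ,α)) ≥ 1 − α, set γ(θ,α) = 1 − μ_θ(K(θ,α)), and define R_α(x) = {θ : x ∈ K(θ,α)}. Suppose for each θ ∈ Θ there exist V(θ,α) ⊆ K(θ,α) and W(θ,α) ⊆ E ∖ K(θ,α) with the same cardinality such that α − γ(θ,α) ≥ μ_θ(V(θ,α)) − μ_θ(W(θ,α)) > 0. Define L(θ,α) = (K(θ,α) ∖ V(θ,α)) ∪ W(θ,α) and T_α(x) = {θ : x ∈ L(θ,α)}. Then for every θ* ∈ Θ and X ∼ μ_θ*, one has 1 − α ≤ P(θ* ∈ T_α(X)) < P(θ* ∈ R_α(X)). -/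
open Finset

theorem Finset.sum_sdiff_union_eq {E β : Type*} [DecidableEq E] [AddCommGroup β]
    {K V W : Finset E} (f : E → β) (hV : V ⊆ K) (hW : Disjoint K W) :
    ∑ x ∈ (K \ V) ∪ W, f x = ∑ x ∈ K, f x - ∑ x ∈ V, f x + ∑ x ∈ W, f x := by
  rw [sum_union (disjoint_of_subset_left sdiff_subset hW), sum_sdiff_eq_sub hV]

theorem improved_confidence_region_coverage_general
    {E Θ : Type*} [Fintype E] [DecidableEq E]
    (μ : Θ → E → ℝ)
    (α : ℝ)
    (K V W : Θ → Finset E)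
    (hV : ∀ θ : Θ, V θ ⊆ K θ)
    (hW : ∀ θ : Θ, W θ ⊆ Finset.univ \ K θ)
    (hupper : ∀ θ : Θ,
      (∑ x ∈ V θ, μ θ x) - (∑ x ∈ W θ, μ θ x) ≤ α - (1 - ∑ x ∈ K θ, μ θ x))
    (hpos : ∀ θ : Θ, 0 < (∑ x ∈ V θ, μ θ x) - (∑ x ∈ W θ, μ θ x))
    (θstar : Θ) :
    1 - α ≤ (∑ x ∈ (K θstar \ V θstar) ∪ W θstar, μ θstar x) ∧
      (∑ x ∈ (K θstar \ V θstar) ∪ W θstar, μ θstar x) <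
        ∑ x ∈ K θstar, μ θstar x := by
  have hdisj : Disjoint (K θstar) (W θstar) := ((subset_sdiff.mp (hW θstar)).2).symm
  rw [sum_sdiff_union_eq (μ θstar) (hV θstar) hdisj]
  exact ⟨by linarith [hupper θstar], by linarith [hpos θstar]⟩

/-- **Improving a conservative confidence region by swapping points.**
Given acceptance sets `K(θ,α)` with `μ_θ(K(θ,α)) ≥ 1 - α` and, for each `θ`,
sets `V(θ,α) ⊆ K(θ,α)` and `W(θ,α) ⊆ E \ K(θ,α)` of the same cardinality with
`α - γ(θ,α) ≥ μ_θ(V(θ,α)) - μ_θ(W(θ,α)) > 0` where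
`γ(θ,α) = 1 - μ_θ(K(θ,α))`, the modified region built from
`L(θ,α) = (K(θ,α) \ V(θ,α)) ∪ W(θ,α)` satisfies
`1 - α ≤ P(θ* ∈ T_α(X)) < P(θ* ∈ R_α(X))` for `X ∼ μ_θ*`. -/
theorem improved_confidence_region_coverage
    {E Θ : Type*} [Fintype E] [DecidableEq E]
    (μ : Θ → E → ℝ)
    (hμ0 : ∀ θ : Θ, ∀ x : E, 0 ≤ μ θ x)
    (hμ1 : ∀ θ : Θ, ∑ x : E, μ θ x = 1)
    (α : ℝ) (hα : α ∈ Set.Ioo (0 : ℝ) 1)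
    (K V W : Θ → Finset E)
    (hK : ∀ θ : Θ, 1 - α ≤ ∑ x ∈ K θ, μ θ x)
    (hV : ∀ θ : Θ, V θ ⊆ K θ)
    (hW : ∀ θ : Θ, W θ ⊆ Finset.univ \ K θ)
    (hcard : ∀ θ : Θ, (V θ).card = (W θ).card)
    (hupper : ∀ θ : Θ,
      (∑ x ∈ V θ, μ θ x) - (∑ x ∈ W θ, μ θ x) ≤ α - (1 - ∑ x ∈ K θ, μ θ x))
    (hpos : ∀ θ : Θ, 0 < (∑ x ∈ V θ, μ θ x) - (∑ x ∈ W θ, μ θ x))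
    (θstar : Θ) :
    1 - α ≤ (∑ x ∈ (K θstar \ V θstar) ∪ W θstar, μ θstar x) ∧
      (∑ x ∈ (K θstar \ V θstar) ∪ W θstar, μ θstar x) <
        ∑ x ∈ K θstar, μ θstar x :=
  improved_confidence_region_coverage_general μ α K V W hV hW hupper hpos θstar
end

section
/- One-sided upper binomial confidence bound: fix n ≥ 1 and α ∈ (0,1), and for x ∈ {0,…,n} define U_α(x) = sup{θ ∈ [0,1] : Σ_{i=0}^{x} C(n,i) θ^i (1−θ)^{n−i} ≥ α}. Then for every p ∈ [0,1] and X ∼ Binom(n,p), P(p ≤ U_α(X)) ≥ 1 − α; equivalently, Σ_{x : p ≤ U_α(x)} C(n,x) p^x (1−p)^{n−x} ≥ 1 − α. -/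
/-!
Let `F(x) = P(X ≤ x)` be the binomial distribution function at the true `p`. Whenever
`α ≤ F(x)`, the parameter `p` itself lies in the set whose supremum is `U_α(x)`, so
`p ≤ U_α(x)`. It remains to see that `{x : F(x) < α}` has probability at most `α`: this set
is an initial segment `{0, …, m}` of the support, and its probability is `F(m) < α`.
-/

open Finset

section PartialSums

variable {M : Type*} [AddCommGroup M] [LinearOrder M] [IsOrderedAddMonoid M]
  {f : ℕ → M} {α : M}

theorem sum_filter_partialSum_lt_le (hf : ∀ i, 0 ≤ f i) (hα : 0 ≤ α) (N : ℕ) :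
    ∑ x ∈ (range N).filter (fun x => ∑ i ∈ range (x + 1), f i < α), f x ≤ α := by
  set B := (range N).filter (fun x => ∑ i ∈ range (x + 1), f i < α)
  rcases B.eq_empty_or_nonempty with hB | hB
  · simpa [hB] using hα
  have hmax : ∑ i ∈ range (B.max' hB + 1), f i < α := (mem_filter.mp (B.max'_mem hB)).2
  have hsub : B ⊆ range (B.max' hB + 1) := fun x hx =>
    mem_range.mpr (Nat.lt_succ_of_le (B.le_max' x hx))
  exact (sum_le_sum_of_subset_of_nonneg hsub fun i _ _ => hf i).trans hmax.le

theorem sum_range_sub_le_sum_filter_le_partialSum (hf : ∀ i, 0 ≤ f i) (hα : 0 ≤ α) (N : ℕ) :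
    ∑ x ∈ range N, f x - α ≤
      ∑ x ∈ (range N).filter (fun x => α ≤ ∑ i ∈ range (x + 1), f i), f x := by
  rw [← sum_filter_add_sum_filter_not (range N) (fun x => α ≤ ∑ i ∈ range (x + 1), f i)]
  simp only [not_le]
  rw [add_sub_assoc]
  exact add_le_of_nonpos_right (sub_nonpos.mpr (sum_filter_partialSum_lt_le hf hα N))

end PartialSums

theorem binomial_pmf_nonneg {p : ℝ} (hp : p ∈ Set.Icc (0 : ℝ) 1) (n x : ℕ) :
    0 ≤ (n.choose x : ℝ) * p ^ x * (1 - p) ^ (n - x) := by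
  have : 0 ≤ 1 - p := sub_nonneg.mpr hp.2
  have := hp.1
  positivity

theorem sum_binomial_pmf (n : ℕ) (p : ℝ) :
    ∑ x ∈ range (n + 1), (n.choose x : ℝ) * p ^ x * (1 - p) ^ (n - x) = 1 := by
  simpa [bernsteinPolynomial, Polynomial.eval_finsetSum] using
    congrArg (Polynomial.eval p) (bernsteinPolynomial.sum ℝ n)

theorem clopper_pearson_upper_coverage_general
    (n : ℕ)
    (α : ℝ) (hα : α ∈ Set.Ioo (0 : ℝ) 1)
    (p : ℝ) (hp : p ∈ Set.Icc (0 : ℝ) 1) :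
    1 - α ≤
      ∑ x ∈ (Finset.range (n + 1)).filter (fun x =>
          p ≤ sSup {θ : ℝ | θ ∈ Set.Icc (0 : ℝ) 1 ∧
            α ≤ ∑ i ∈ Finset.range (x + 1),
              (n.choose i : ℝ) * θ ^ i * (1 - θ) ^ (n - i)}),
        (n.choose x : ℝ) * p ^ x * (1 - p) ^ (n - x) := by
  have hcover := sum_range_sub_le_sum_filter_le_partialSum (binomial_pmf_nonneg hp n)
    hα.1.le (n + 1)
  rw [sum_binomial_pmf] at hcover
  refine hcover.trans (sum_le_sum_of_subset_of_nonneg ?_ fun x _ _ => binomial_pmf_nonneg hp n x)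
  intro x hx
  obtain ⟨hx_range, hx_cdf⟩ := mem_filter.mp hx
  exact mem_filter.mpr ⟨hx_range, le_csSup ⟨1, fun _ hθ => hθ.1.2⟩ ⟨hp, hx_cdf⟩⟩

/-- **Coverage of the one-sided upper Clopper–Pearson bound.**
With `U_α(x) = sup{θ ∈ [0,1] : Σ_{i=0}^x C(n,i) θ^i (1-θ)^(n-i) ≥ α}`, one has
`P(p ≤ U_α(X)) ≥ 1 - α` for `X ∼ Binom(n,p)`. -/
theorem clopper_pearson_upper_coverage
    (n : ℕ) (hn : 1 ≤ n)
    (α : ℝ) (hα : α ∈ Set.Ioo (0 : ℝ) 1)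
    (p : ℝ) (hp : p ∈ Set.Icc (0 : ℝ) 1) :
    1 - α ≤
      ∑ x ∈ (Finset.range (n + 1)).filter (fun x =>
          p ≤ sSup {θ : ℝ | θ ∈ Set.Icc (0 : ℝ) 1 ∧
            α ≤ ∑ i ∈ Finset.range (x + 1),
              (n.choose i : ℝ) * θ ^ i * (1 - θ) ^ (n - i)}),
        (n.choose x : ℝ) * p ^ x * (1 - p) ^ (n - x) :=
  clopper_pearson_upper_coverage_general n α hα p hp
end

section
/- Clopper–Pearson coverage: fix n ≥ 1 and α ∈ (0,1), and for x ∈ {0,…,n} define L(x) = inf{θ ∈ [0,1] : Σ_{i=x}^{n} C(n,i) θ^i (1−θ)^{n−i} ≥ α/2} and U(x) = sup{θ ∈ [0,1] : Σ_{i=0}^{x} C(n,i) θ^i (1−θ)^{n−i} ≥ α/2}. Then for every p ∈ [0,1] and X ∼ Binom(n,p), the two-sided interval [L(X), U(X)] has coverage at least 1 − α: Σ_{x : L(x) ≤ p ≤ U(x)} C(n,x) p^x (1−p)^{n−x} ≥ 1 − α. -/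
/-!
If `p < L(x)`, then `p` is not in the set defining `L(x)`, so the upper tail of `Binom(n,p)`
from `x` is below `α/2`. Every `x` with `p < L(x)` lies in the upper tail from the smallest
such `x`, hence these outcomes together have mass below `α/2`; no monotonicity of the tails
in `θ` is needed. Symmetrically the outcomes with `U(x) < p` have mass below `α/2`, and a union
bound gives coverage at least `1 - α`.
-/

open Finset

theorem sum_range_choose_mul_pow_mul_one_sub_pow {R : Type*} [CommRing R] (n : ℕ) (p : R) :
    ∑ x ∈ range (n + 1), (n.choose x : R) * p ^ x * (1 - p) ^ (n - x) = 1 := by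
  have h := add_pow p (1 - p) n
  rw [add_sub_cancel, one_pow] at h
  exact (sum_congr rfl fun x _ => by ring).trans h.symm

theorem Finset.sum_sub_sub_le_sum_filter_and {ι M : Type*} [AddCommGroup M] [PartialOrder M]
    [IsOrderedAddMonoid M] {s : Finset ι} {P Q : ι → Prop} [DecidablePred P] [DecidablePred Q]
    {f : ι → M} {a b : M} (hf : ∀ i ∈ s, 0 ≤ f i)
    (hP : ∑ i ∈ s with ¬P i, f i ≤ a) (hQ : ∑ i ∈ s with ¬Q i, f i ≤ b) :
    ∑ i ∈ s, f i - a - b ≤ ∑ i ∈ s with P i ∧ Q i, f i := by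
  have union_bound : ∑ i ∈ s, f i ≤
      ∑ i ∈ s with P i ∧ Q i, f i + ∑ i ∈ s with ¬P i, f i + ∑ i ∈ s with ¬Q i, f i := by
    simp only [sum_filter, ← sum_add_distrib]
    gcongr with i hi
    have := hf i hi
    split_ifs <;> simp_all
  rw [sub_sub, sub_le_iff_le_add]
  exact union_bound.trans (by rw [add_assoc]; gcongr)

theorem sum_range_filter_le_of_sum_Icc_le {M : Type*} [AddCommMonoid M] [PartialOrder M]
    [IsOrderedAddMonoid M] {n : ℕ} {P : ℕ → Prop} [DecidablePred P] {f : ℕ → M} {c : M}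
    (hf : ∀ i, 0 ≤ f i) (hc : 0 ≤ c) (h : ∀ x ≤ n, P x → ∑ i ∈ Icc x n, f i ≤ c) :
    ∑ x ∈ range (n + 1) with P x, f x ≤ c := by
  set A := {x ∈ range (n + 1) | P x}
  rcases A.eq_empty_or_nonempty with hA | hA
  · simpa [hA] using hc
  have hmin := mem_filter.mp (A.min'_mem hA)
  have hn : A.min' hA ≤ n := Nat.lt_succ_iff.mp (mem_range.mp hmin.1)
  refine le_trans (sum_le_sum_of_subset_of_nonneg ?_ fun i _ _ => hf i) (h _ hn hmin.2)
  intro x hx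
  exact mem_Icc.2 ⟨A.min'_le x hx, Nat.lt_succ_iff.mp (mem_range.mp (mem_filter.mp hx).1)⟩

theorem sum_range_filter_le_of_sum_range_le {M : Type*} [AddCommMonoid M] [PartialOrder M]
    [IsOrderedAddMonoid M] {n : ℕ} {P : ℕ → Prop} [DecidablePred P] {f : ℕ → M} {c : M}
    (hf : ∀ i, 0 ≤ f i) (hc : 0 ≤ c) (h : ∀ x, P x → ∑ i ∈ range (x + 1), f i ≤ c) :
    ∑ x ∈ range (n + 1) with P x, f x ≤ c := by
  set B := {x ∈ range (n + 1) | P x}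
  rcases B.eq_empty_or_nonempty with hB | hB
  · simpa [hB] using hc
  refine le_trans (sum_le_sum_of_subset_of_nonneg ?_ fun i _ _ => hf i)
    (h _ (mem_filter.mp (B.max'_mem hB)).2)
  exact fun x hx => mem_range.2 (Nat.lt_succ_of_le (B.le_max' x hx))

theorem lt_of_lt_sInf_setOf_Icc {g : ℝ → ℝ} {c p : ℝ} (hp : p ∈ Set.Icc (0 : ℝ) 1)
    (h : p < sInf {θ | θ ∈ Set.Icc (0 : ℝ) 1 ∧ c ≤ g θ}) : g p < c :=
  not_le.mp fun hle => notMem_of_lt_csInf h ⟨0, fun _ hθ => hθ.1.1⟩ ⟨hp, hle⟩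

theorem lt_of_sSup_setOf_Icc_lt {g : ℝ → ℝ} {c p : ℝ} (hp : p ∈ Set.Icc (0 : ℝ) 1)
    (h : sSup {θ | θ ∈ Set.Icc (0 : ℝ) 1 ∧ c ≤ g θ} < p) : g p < c :=
  not_le.mp fun hle => notMem_of_csSup_lt h ⟨1, fun _ hθ => hθ.1.2⟩ ⟨hp, hle⟩

theorem clopper_pearson_coverage_general
    (n : ℕ)
    (α : ℝ) (hα : α ∈ Set.Ioo (0 : ℝ) 1)
    (p : ℝ) (hp : p ∈ Set.Icc (0 : ℝ) 1) :
    1 - α ≤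
      ∑ x ∈ (Finset.range (n + 1)).filter (fun x =>
          sInf {θ : ℝ | θ ∈ Set.Icc (0 : ℝ) 1 ∧
            α / 2 ≤ ∑ i ∈ Finset.Icc x n,
              (n.choose i : ℝ) * θ ^ i * (1 - θ) ^ (n - i)} ≤ p ∧
          p ≤ sSup {θ : ℝ | θ ∈ Set.Icc (0 : ℝ) 1 ∧
            α / 2 ≤ ∑ i ∈ Finset.range (x + 1),
              (n.choose i : ℝ) * θ ^ i * (1 - θ) ^ (n - i)}),
        (n.choose x : ℝ) * p ^ x * (1 - p) ^ (n - x) := by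
  have hf (x : ℕ) : 0 ≤ (n.choose x : ℝ) * p ^ x * (1 - p) ^ (n - x) :=
    mul_nonneg (mul_nonneg (Nat.cast_nonneg _) (pow_nonneg hp.1 _))
      (pow_nonneg (sub_nonneg.2 hp.2) _)
  have hα₀ : 0 ≤ α / 2 := by linarith [hα.1]
  refine (le_of_eq ?_).trans (sum_sub_sub_le_sum_filter_and (a := α / 2) (b := α / 2)
    (fun x _ => hf x) ?_ ?_)
  · rw [sum_range_choose_mul_pow_mul_one_sub_pow]
    ring
  · exact sum_range_filter_le_of_sum_Icc_le hf hα₀ fun x _ hx =>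
      (lt_of_lt_sInf_setOf_Icc hp (not_le.mp hx)).le
  · exact sum_range_filter_le_of_sum_range_le hf hα₀ fun x hx =>
      (lt_of_sSup_setOf_Icc_lt hp (not_le.mp hx)).le

/-- **Coverage of the two-sided Clopper–Pearson interval.**
With `L(x) = inf{θ ∈ [0,1] : Σ_{i=x}^n C(n,i) θ^i (1-θ)^(n-i) ≥ α/2}` and
`U(x) = sup{θ ∈ [0,1] : Σ_{i=0}^x C(n,i) θ^i (1-θ)^(n-i) ≥ α/2}`, one has
`P(L(X) ≤ p ≤ U(X)) ≥ 1 - α` for `X ∼ Binom(n,p)`. -/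
theorem clopper_pearson_coverage
    (n : ℕ) (hn : 1 ≤ n)
    (α : ℝ) (hα : α ∈ Set.Ioo (0 : ℝ) 1)
    (p : ℝ) (hp : p ∈ Set.Icc (0 : ℝ) 1) :
    1 - α ≤
      ∑ x ∈ (Finset.range (n + 1)).filter (fun x =>
          sInf {θ : ℝ | θ ∈ Set.Icc (0 : ℝ) 1 ∧
            α / 2 ≤ ∑ i ∈ Finset.Icc x n,
              (n.choose i : ℝ) * θ ^ i * (1 - θ) ^ (n - i)} ≤ p ∧
          p ≤ sSup {θ : ℝ | θ ∈ Set.Icc (0 : ℝ) 1 ∧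
            α / 2 ≤ ∑ i ∈ Finset.range (x + 1),
              (n.choose i : ℝ) * θ ^ i * (1 - θ) ^ (n - i)}),
        (n.choose x : ℝ) * p ^ x * (1 - p) ^ (n - x) :=
  clopper_pearson_coverage_general n α hα p hp
end

section
/- Dirichlet–Multinomial correspondence via order statistics: fix d ≥ 2, n ≥ 1, p ∈ Λ_d, and integers 0 ≤ k_1 ≤ k_2 ≤ ⋯ ≤ k_{d−1} ≤ n. Let X ∼ M_d(n,p) be multinomial and let U_1,…,U_n be i.i.d. uniform on [0,1] with order statistics U_{(1)} ≤ ⋯ ≤ U_{(n)} (with the convention U_{(0)} = 0). Then P(X_1 ≥ k_1, X_1+X_2 ≥ k_2, …, X_1+⋯+X_{d−1} ≥ k_{d−1}) equals the Lebesgue measure of the set of (u_1,…,u_n) ∈ [0,1]^n whose order statistics satisfy u_{(k_j)} ≤ p_1 + ⋯ + p_j for every 1 ≤ j ≤ d−1. Equivalently, Σ_{x∈E_d : x_1+⋯+x_j ≥ k_j for all j} (n!/(x_1!⋯x_d!)) ∏_i p_i^{x_i} = Leb^n({u ∈ [0,1]^n : u_{(k_j)} ≤ p_1+⋯+p_j,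 1 ≤ j ≤ d−1}). -/
/-!
Cut `[0, 1]` into consecutive cells of lengths `p 0, …, p (d-1)`. Labelling each coordinate of
`u ∈ [0, 1]ⁿ` by the cell containing it splits the cube into disjoint boxes indexed by
`f : Fin n → Fin d`, the box of `f` having volume `∏ m, p (f m)`. On that box,
`u_{(k)} ≤ p 0 + ⋯ + p j` says exactly that at least `k` coordinates carry a label `≤ j`,
a condition on the label counts of `f` alone. Grouping the labellings by their count vector
`x`, of which there are `n! / ∏ i, x i!` by orbit–stabilizer for `Perm (Fin n)` acting on
labellings, turns the volume into the multinomial sum.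
-/

open Finset MeasureTheory

/-- The `k`-th order statistic `u_{(k)}` of `u ∈ ℝ^n`, for `1 ≤ k ≤ n`, with
the convention `u_{(0)} = 0` (and value `0` out of range). -/
noncomputable def ordStat (n : ℕ) (u : Fin n → ℝ) (k : ℕ) : ℝ :=
  if h : 1 ≤ k ∧ k ≤ n then u (Tuple.sort u ⟨k - 1, by omega⟩) else 0

section FiberCard
variable {α ι : Type*} [Fintype α] [DecidableEq ι]

def fiberCard (f : α → ι) (i : ι) : ℕ := #{a | f a = i}

lemma fiberCard_le (f : α → ι) (i : ι) : fiberCard f i ≤ Fintype.card α :=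
  card_filter_le _ _

lemma sum_fiberCard [Fintype ι] (f : α → ι) : ∑ i, fiberCard f i = Fintype.card α :=
  (card_eq_sum_card_fiberwise fun a _ => mem_coe.2 (mem_univ (f a))).symm

lemma fiberCard_comp_perm (f : α → ι) (σ : Equiv.Perm α) :
    fiberCard (f ∘ σ) = fiberCard f := by
  funext i
  exact card_equiv σ (by simp)

lemma exists_perm_comp_eq_of_fiberCard_eq [DecidableEq α] {f g : α → ι}
    (h : fiberCard f = fiberCard g) : ∃ σ : Equiv.Perm α, f ∘ σ = g := by
  have e : ∀ i, {a // g a = i} ≃ {a // f a = i} := fun i =>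
    Fintype.equivOfCardEq (by simp only [Fintype.card_subtype]; exact congrFun h.symm i)
  exact ⟨Equiv.ofFiberEquiv e, funext (Equiv.ofFiberEquiv_map e)⟩

lemma exists_fiberCard_eq [Fintype ι] (x : ι → ℕ) (hx : ∑ i, x i = Fintype.card α) :
    ∃ f : α → ι, fiberCard f = x := by
  let e : α ≃ Σ i, Fin (x i) := Fintype.equivOfCardEq (by simp [hx])
  refine ⟨fun a => (e a).1, funext fun i => ?_⟩
  rw [fiberCard, ← Fintype.card_subtype,
    Fintype.card_congr ((e.subtypeEquiv fun _ => Iff.rfl).trans (Equiv.sigmaSubtype i)),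
    Fintype.card_fin]

lemma card_perm_comp_eq_prod_factorial [DecidableEq α] [Fintype ι] {f g : α → ι}
    (h : fiberCard f = fiberCard g) :
    #{σ : Equiv.Perm α | f ∘ σ = g} = ∏ i, (fiberCard f i).factorial := by
  obtain ⟨σ₀, rfl⟩ := exists_perm_comp_eq_of_fiberCard_eq h
  have hstab := DomMulAct.stabilizer_card f
  simp only [Fintype.card_subtype] at hstab
  simp only [fiberCard, ← hstab]
  -- `σ ↦ σ * σ₀⁻¹` is a bijection onto the stabilizer of `f`.
  refine card_equiv (Equiv.mulRight σ₀⁻¹) fun σ => ?_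
  simp [← Function.comp_assoc, Equiv.comp_symm_eq]

theorem card_fiberCard_eq_mul_prod_factorial [DecidableEq α] [Fintype ι] (x : ι → ℕ)
    (hx : ∑ i, x i = Fintype.card α) :
    #{g : α → ι | fiberCard g = x} * ∏ i, (x i).factorial = (Fintype.card α).factorial := by
  obtain ⟨f, rfl⟩ := exists_fiberCard_eq x hx
  have hmaps : ∀ σ ∈ (univ : Finset (Equiv.Perm α)),
      f ∘ σ ∈ ({g | fiberCard g = fiberCard f} : Finset (α → ι)) :=
    fun σ _ => by simp [fiberCard_comp_perm]
  rw [← Fintype.card_perm, ← card_univ, card_eq_sum_card_fiberwise hmaps,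
    sum_congr rfl fun g hg => card_perm_comp_eq_prod_factorial (mem_filter.1 hg).2.symm,
    sum_const, smul_eq_mul]

lemma prod_comp_eq_prod_pow_fiberCard {M : Type*} [CommMonoid M] [Fintype ι] (p : ι → M)
    (f : α → ι) : ∏ a, p (f a) = ∏ i, p i ^ fiberCard f i := by
  rw [← prod_fiberwise univ f]
  refine prod_congr rfl fun i _ => ?_
  rw [prod_congr rfl fun a ha => congrArg p (mem_filter.1 ha).2, prod_const]
  rfl

end FiberCard

theorem sum_prod_filter_fiberCard_eq_sum_multinomialPMF {d n : ℕ} (p : Fin d → ℝ)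
    (P : (Fin d → ℕ) → Prop) [DecidablePred P] :
    ∑ f : Fin n → Fin d with P (fiberCard f), ∏ m, p (f m) =
      ∑ x ∈ (multinomialSupport d n).filter (fun x => P (fun i => x i)),
        multinomialPMF d n p x := by
  let counts : (Fin n → Fin d) → Fin d → Fin (n + 1) := fun f i =>
    ⟨fiberCard f i, Nat.lt_succ_of_le ((fiberCard_le f i).trans_eq (Fintype.card_fin n))⟩
  have hcounts : ∀ f x, counts f = x ↔ fiberCard f = fun i => (x i : ℕ) := fun f x => by
    simp only [funext_iff, Fin.ext_iff, counts]
  have hmaps : ∀ f ∈ ({f | P (fiberCard f)} : Finset (Fin n → Fin d)),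
      counts f ∈ (multinomialSupport d n).filter (fun x => P (fun i => x i)) := fun f hf => by
    simpa [multinomialSupport, counts, sum_fiberCard] using hf
  rw [← sum_fiberwise_of_maps_to hmaps]
  refine sum_congr rfl fun x hxmem => ?_
  obtain ⟨hxsupp, hxP⟩ := mem_filter.1 hxmem
  have hx : ∑ i, (x i : ℕ) = Fintype.card (Fin n) := by
    simpa [multinomialSupport] using hxsupp
  have hfiber : ({f | P (fiberCard f)} : Finset (Fin n → Fin d)).filter (fun f => counts f = x) =
      ({f | fiberCard f = fun i => (x i : ℕ)} : Finset (Fin n → Fin d)) := by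
    ext f
    simp only [mem_filter, mem_univ, true_and, hcounts]
    exact ⟨And.right, fun h => ⟨h ▸ hxP, h⟩⟩
  have hcount := card_fiberCard_eq_mul_prod_factorial _ hx
  rw [Fintype.card_fin] at hcount
  rw [hfiber,
    sum_congr rfl fun f hf => by rw [prod_comp_eq_prod_pow_fiberCard, (mem_filter.1 hf).2],
    sum_const, nsmul_eq_mul, multinomialPMF, ← hcount]
  have hfac : (0 : ℝ) < ∏ i, ((x i : ℕ).factorial : ℝ) := prod_pos fun i _ => by positivity
  push_cast
  field_simp

section Cells
variable {d : ℕ} {p : Fin d → ℝ}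

variable (p) in
def cumSum (t : ℕ) : ℝ := ∑ i ∈ univ.filter (fun i : Fin d => (i : ℕ) ≤ t), p i

lemma cumSum_nonneg (hp0 : ∀ i, 0 ≤ p i) (t : ℕ) : 0 ≤ cumSum p t :=
  sum_nonneg fun i _ => hp0 i

lemma cumSum_mono (hp0 : ∀ i, 0 ≤ p i) : Monotone (cumSum p) := fun _ _ hst =>
  sum_le_sum_of_subset_of_nonneg
    (fun _ hi => mem_filter.2 ⟨mem_univ _, (mem_filter.1 hi).2.trans hst⟩) fun i _ _ => hp0 i

lemma cumSum_le_sum (hp0 : ∀ i, 0 ≤ p i) (t : ℕ) : cumSum p t ≤ ∑ i, p i :=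
  sum_le_sum_of_subset_of_nonneg (filter_subset _ _) fun i _ _ => hp0 i

lemma cumSum_of_le (t : ℕ) (h : d ≤ t + 1) : cumSum p t = ∑ i, p i := by
  rw [cumSum, filter_true_of_mem fun i _ => by omega]

lemma cumSum_succ {t : ℕ} (h : t + 1 < d) : cumSum p (t + 1) = cumSum p t + p ⟨t + 1, h⟩ := by
  have : univ.filter (fun i : Fin d => (i : ℕ) ≤ t + 1) =
      insert ⟨t + 1, h⟩ (univ.filter fun i : Fin d => (i : ℕ) ≤ t) := by
    ext i
    simp only [mem_filter, mem_univ, true_and, mem_insert, Fin.ext_iff]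
    omega
  rw [cumSum, this, sum_insert (by simp), add_comm]
  rfl

variable (p) in
/-- The first cell is closed so that the cells partition `[0, 1]` exactly, not only up to a
null set. -/
def cell (i : Fin d) : Set ℝ :=
  if (i : ℕ) = 0 then Set.Icc 0 (cumSum p 0) else Set.Ioc (cumSum p (i - 1)) (cumSum p i)

lemma measurableSet_cell (i : Fin d) : MeasurableSet (cell p i) := by
  unfold cell
  split_ifs
  exacts [measurableSet_Icc, measurableSet_Ioc]

lemma volume_cell (i : Fin d) : volume (cell p i) = ENNReal.ofReal (p i) := by
  unfold cell
  split_ifs with hi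
  · rw [Real.volume_Icc, sub_zero, cumSum, sum_eq_single_of_mem i (by simp [hi])
      fun j hj hji => absurd (Fin.ext (by simp at hj; omega)) hji]
  · obtain ⟨t, ht⟩ : ∃ t, (i : ℕ) = t + 1 := ⟨i - 1, by omega⟩
    have hi' : i = ⟨t + 1, ht ▸ i.isLt⟩ := Fin.ext ht
    rw [Real.volume_Ioc, ht, Nat.add_sub_cancel, cumSum_succ (ht ▸ i.isLt), ← hi',
      add_sub_cancel_left]

lemma cell_subset_Icc (hp0 : ∀ i, 0 ≤ p i) (hp1 : ∑ i, p i = 1) (i : Fin d) :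
    cell p i ⊆ Set.Icc 0 1 := by
  have hle := fun t => hp1 ▸ cumSum_le_sum hp0 t
  unfold cell
  split_ifs
  · exact Set.Icc_subset_Icc le_rfl (hle 0)
  · exact Set.Ioc_subset_Icc_self.trans (Set.Icc_subset_Icc (cumSum_nonneg hp0 _) (hle _))

lemma le_cumSum_iff_of_mem_cell (hp0 : ∀ i, 0 ≤ p i) {i : Fin d} {u : ℝ} (hu : u ∈ cell p i)
    (t : ℕ) : u ≤ cumSum p t ↔ (i : ℕ) ≤ t := by
  unfold cell at hu
  split_ifs at hu with hi
  · exact ⟨fun _ => hi ▸ t.zero_le, fun _ => hu.2.trans (cumSum_mono hp0 t.zero_le)⟩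
  · refine ⟨fun hut => ?_, fun hit => hu.2.trans (cumSum_mono hp0 hit)⟩
    by_contra! hti
    exact (hu.1.trans_le hut).not_ge (cumSum_mono hp0 (by omega))

lemma pairwise_disjoint_cell (hp0 : ∀ i, 0 ≤ p i) :
    Pairwise fun i j => Disjoint (cell p i) (cell p j) := by
  intro i j hij
  refine Set.disjoint_left.2 fun u hui huj => hij (Fin.ext (le_antisymm ?_ ?_))
  · exact (le_cumSum_iff_of_mem_cell hp0 hui _).1 ((le_cumSum_iff_of_mem_cell hp0 huj _).2 le_rfl)
  · exact (le_cumSum_iff_of_mem_cell hp0 huj _).1 ((le_cumSum_iff_of_mem_cell hp0 hui _).2 le_rfl)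

lemma exists_mem_cell (hp1 : ∑ i, p i = 1) {u : ℝ} (hu : u ∈ Set.Icc (0 : ℝ) 1) :
    ∃ i, u ∈ cell p i := by
  have hd : d ≠ 0 := by rintro rfl; simp at hp1
  have hex : ∃ t, u ≤ cumSum p t := ⟨d, by rw [cumSum_of_le d (by omega), hp1]; exact hu.2⟩
  have hmin := fun t => Nat.find_min (m := t) hex
  have hlt : Nat.find hex < d := by
    by_contra! h
    exact hmin (Nat.find hex - 1) (by omega) (by rw [cumSum_of_le _ (by omega), hp1]; exact hu.2)
  refine ⟨⟨Nat.find hex, hlt⟩, ?_⟩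
  unfold cell
  simp only
  split_ifs with h0
  · exact ⟨hu.1, h0 ▸ Nat.find_spec hex⟩
  · exact ⟨not_le.1 (hmin _ (by omega)), Nat.find_spec hex⟩

end Cells

section Boxes
variable {d n : ℕ} {p : Fin d → ℝ}

variable (p) in
def cellBox (f : Fin n → Fin d) : Set (Fin n → ℝ) := Set.univ.pi fun m => cell p (f m)

lemma measurableSet_cellBox (f : Fin n → Fin d) : MeasurableSet (cellBox p f) :=
  MeasurableSet.univ_pi fun _ => measurableSet_cell _

lemma volume_cellBox (hp0 : ∀ i, 0 ≤ p i) (f : Fin n → Fin d) :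
    volume (cellBox p f) = ENNReal.ofReal (∏ m, p (f m)) := by
  rw [cellBox, volume_pi_pi, ENNReal.ofReal_prod_of_nonneg fun m _ => hp0 (f m)]
  simp only [volume_cell]

lemma pairwise_disjoint_cellBox (hp0 : ∀ i, 0 ≤ p i) :
    Pairwise fun f g : Fin n → Fin d => Disjoint (cellBox p f) (cellBox p g) := by
  intro f g hfg
  obtain ⟨m, hm⟩ := Function.ne_iff.1 hfg
  exact Set.disjoint_left.2 fun u huf hug =>
    Set.disjoint_left.1 (pairwise_disjoint_cell hp0 hm) (huf m trivial) (hug m trivial)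

lemma exists_mem_cellBox (hp1 : ∑ i, p i = 1) {u : Fin n → ℝ}
    (hu : ∀ m, u m ∈ Set.Icc (0 : ℝ) 1) :
    ∃ f, u ∈ cellBox p f := by
  choose f hf using fun m => exists_mem_cell hp1 (hu m)
  exact ⟨f, fun m _ => hf m⟩

lemma card_le_cumSum_of_mem_cellBox (hp0 : ∀ i, 0 ≤ p i) {f : Fin n → Fin d}
    {u : Fin n → ℝ} (hu : u ∈ cellBox p f) (t : ℕ) :
    #{m | u m ≤ cumSum p t} =
      ∑ i ∈ univ.filter (fun i : Fin d => (i : ℕ) ≤ t), fiberCard f i := by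
  simp only [fiberCard, sum_card_fiberwise_eq_card_filter]
  congr 1
  ext m
  simp [le_cumSum_iff_of_mem_cell hp0 (hu m trivial)]

lemma volume_biUnion_cellBox (hp0 : ∀ i, 0 ≤ p i) (s : Finset (Fin n → Fin d)) :
    (volume (⋃ f ∈ s, cellBox p f)).toReal = ∑ f ∈ s, ∏ m, p (f m) := by
  rw [measure_biUnion_finset ((pairwise_disjoint_cellBox hp0).set_pairwise _)
    fun f _ => measurableSet_cellBox f]
  simp only [volume_cellBox hp0]
  rw [ENNReal.toReal_sum fun _ _ => ENNReal.ofReal_ne_top]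
  exact sum_congr rfl fun f _ => ENNReal.toReal_ofReal (prod_nonneg fun m _ => hp0 (f m))

end Boxes

lemma ordStat_le_iff {n k : ℕ} (u : Fin n → ℝ) (hk : k ≤ n) {a : ℝ} (ha : 0 ≤ a) :
    ordStat n u k ≤ a ↔ k ≤ #{m | u m ≤ a} := by
  rcases Nat.eq_zero_or_pos k with rfl | hk0
  · simp [ordStat, ha]
  have hcard : #{i | u (Tuple.sort u i) ≤ a} = #{m | u m ≤ a} :=
    card_equiv (Tuple.sort u) (by simp)
  have hsort := Tuple.lt_card_le_iff_apply_le_of_monotone (j := ⟨k - 1, by omega⟩) (a := a)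
    (Tuple.monotone_sort u)
  rw [ordStat, dif_pos ⟨hk0, hk⟩]
  simp only [Function.comp_apply, hcard] at hsort
  rw [← hsort]
  omega

lemma ordStat_le_cumSum_iff_of_mem_cellBox {d n k : ℕ} {p : Fin d → ℝ}
    (hp0 : ∀ i, 0 ≤ p i) {f : Fin n → Fin d} {u : Fin n → ℝ} (hu : u ∈ cellBox p f)
    (hk : k ≤ n) (t : ℕ) :
    ordStat n u k ≤ cumSum p t ↔
      k ≤ ∑ i ∈ univ.filter (fun i : Fin d => (i : ℕ) ≤ t), fiberCard f i := by
  rw [ordStat_le_iff u hk (cumSum_nonneg hp0 t), card_le_cumSum_of_mem_cellBox hp0 hu]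

theorem setOf_ordStat_le_cumSum_eq_biUnion_cellBox {d n : ℕ} {p : Fin d → ℝ}
    (hp0 : ∀ i, 0 ≤ p i) (hp1 : ∑ i, p i = 1) {J : Type*} [Fintype J] (k t : J → ℕ)
    (hkn : ∀ j, k j ≤ n) :
    {u : Fin n → ℝ | (∀ m, u m ∈ Set.Icc (0 : ℝ) 1) ∧
        ∀ j, ordStat n u (k j) ≤ cumSum p (t j)} =
      ⋃ f ∈ univ.filter (fun f : Fin n → Fin d =>
        ∀ j, k j ≤ ∑ i ∈ univ.filter (fun i : Fin d => (i : ℕ) ≤ t j), fiberCard f i),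
        cellBox p f := by
  have key {f u} (hu : u ∈ cellBox p f) (j : J) :=
    ordStat_le_cumSum_iff_of_mem_cellBox hp0 hu (hkn j) (t j)
  ext u
  simp only [Set.mem_ofPred_eq, Set.mem_iUnion, mem_filter, mem_univ, true_and, exists_prop]
  constructor
  · rintro ⟨hu01, hord⟩
    obtain ⟨f, hf⟩ := exists_mem_cellBox hp1 hu01
    exact ⟨f, fun j => (key hf j).1 (hord j), hf⟩
  · rintro ⟨f, hgood, hf⟩
    exact ⟨fun m => cell_subset_Icc hp0 hp1 _ (hf m trivial), fun j => (key hf j).2 (hgood j)⟩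

theorem dirichlet_multinomial_correspondence_general
    (d n : ℕ)
    (p : Fin d → ℝ) (hp0 : ∀ i, 0 ≤ p i) (hp1 : ∑ i, p i = 1)
    (k : Fin (d - 1) → ℕ) (hkn : ∀ j, k j ≤ n) :
    ∑ x ∈ (multinomialSupport d n).filter (fun x =>
        ∀ j : Fin (d - 1),
          k j ≤ ∑ i ∈ Finset.univ.filter (fun i : Fin d => (i : ℕ) ≤ (j : ℕ)),
            (x i : ℕ)),
      multinomialPMF d n p x =
    (MeasureTheory.volume {u : Fin n → ℝ |
        (∀ i, u i ∈ Set.Icc (0 : ℝ) 1) ∧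
        ∀ j : Fin (d - 1),
          ordStat n u (k j) ≤
            ∑ i ∈ Finset.univ.filter (fun i : Fin d => (i : ℕ) ≤ (j : ℕ)),
              p i}).toReal := by
  have hset := setOf_ordStat_le_cumSum_eq_biUnion_cellBox hp0 hp1 k (fun j => j) hkn
  unfold cumSum at hset
  rw [hset, volume_biUnion_cellBox hp0]
  -- `convert` identifies the statement's instance `Nat.decidableForallFin` with
  -- `Fintype.decidableForallFintype`, which the general lemma produces.
  convert (sum_prod_filter_fiberCard_eq_sum_multinomialPMF (n := n) p fun c =>
    ∀ j : Fin (d - 1), k j ≤ ∑ i ∈ univ.filter (fun i : Fin d => (i : ℕ) ≤ j), c i).symm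

/-- **Dirichlet–Multinomial correspondence via order statistics.**
For `X ∼ M_d(n,p)` and `0 ≤ k_1 ≤ ⋯ ≤ k_{d-1} ≤ n`,
`P(X_1 ≥ k_1, …, X_1+⋯+X_{d-1} ≥ k_{d-1})` equals the Lebesgue measure of the
set of `u ∈ [0,1]^n` whose order statistics satisfy
`u_{(k_j)} ≤ p_1 + ⋯ + p_j` for all `1 ≤ j ≤ d-1`. -/
theorem dirichlet_multinomial_correspondence
    (d n : ℕ) (hd : 2 ≤ d) (hn : 1 ≤ n)
    (p : Fin d → ℝ) (hp0 : ∀ i, 0 ≤ p i) (hp1 : ∑ i, p i = 1)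
    (k : Fin (d - 1) → ℕ) (hkn : ∀ j, k j ≤ n) (hkmono : Monotone k) :
    ∑ x ∈ (multinomialSupport d n).filter (fun x =>
        ∀ j : Fin (d - 1),
          k j ≤ ∑ i ∈ Finset.univ.filter (fun i : Fin d => (i : ℕ) ≤ (j : ℕ)),
            (x i : ℕ)),
      multinomialPMF d n p x =
    (MeasureTheory.volume {u : Fin n → ℝ |
        (∀ i, u i ∈ Set.Icc (0 : ℝ) 1) ∧
        ∀ j : Fin (d - 1),
          ordStat n u (k j) ≤
            ∑ i ∈ Finset.univ.filter (fun i : Fin d => (i : ℕ) ≤ (j : ℕ)),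
              p i}).toReal :=
  dirichlet_multinomial_correspondence_general d n p hp0 hp1 k hkn
end
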